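/- arXiv:2210.04364 — 3 statements merged into one kernel-verified Lean document; each statement's English description precedes it below -/
import Mathlib

section
/- Let φ : [0,1] → ℝ be a Lipschitz function with φ(0) = 0. Suppose there exist p ≥ 1 and a non-negative function λ ∈ L^p(0,1) such that |φ'(x)| ≤ λ(x)·|φ(x)|·x^((1-p)/p) for almost every x ∈ (0,1). Then φ ≡ 0 on [0,1]. -/
/-!
Hölder's inequality and `t ^ ((1 - p) / p) * (t - a) ≤ (t - a) ^ (1 / p)` give, for `0 ≤ a < x`,
`∫ₐˣ λ(t) t^((1-p)/p) (t - a) dt ≤ ‖λ‖_{L^p(a,x)} (x - a)`. So if `φ a = 0` and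
`c := ‖λ‖_{L^p(a,b)} < 1`, feeding a bound `|φ t| ≤ K c^n (t - a)` (for `n = 0` the Lipschitz
bound) into `|φ x| ≤ ∫ₐˣ |φ'| ≤ ∫ₐˣ λ |φ| t^((1-p)/p)` improves it to `K c^(n+1) (x - a)`,
hence `φ = 0` on `[a, b]`. Absolute continuity of `∫ λ^p` provides such a `b > a` for every
`a < 1`, and a continuous induction spreads the zero set of `φ` from `0` over `[0, 1]`.
-/

open MeasureTheory Set ENNReal Filter Topology

theorem LipschitzOnWith.enorm_sub_le_lintegral_deriv {φ : ℝ → ℝ} {K : NNReal} {a b : ℝ}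
    (hφ : LipschitzOnWith K φ (Icc a b)) (hab : a ≤ b) :
    ‖φ b - φ a‖ₑ ≤ ∫⁻ t in Ioo a b, ‖deriv φ t‖ₑ := by
  rw [← uIcc_of_le hab] at hφ
  rw [← hφ.absolutelyContinuousOnInterval.integral_deriv_eq_sub,
    intervalIntegral.integral_of_le hab, restrict_Ioo_eq_restrict_Ioc]
  exact enorm_integral_le_lintegral_enorm _

theorem lintegral_le_lintegral_rpow_mul_measure_univ {α : Type*} [MeasurableSpace α]
    (μ : Measure α) (f : α → ℝ≥0∞) {p : ℝ} (hp : 1 ≤ p) :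
    ∫⁻ a, f a ∂μ ≤ (∫⁻ a, f a ^ p ∂μ) ^ (1 / p) * μ univ ^ (1 - 1 / p) := by
  obtain ⟨g, hg, hgf, hfg⟩ := exists_measurable_le_lintegral_eq μ f
  have hHolder := eLpNorm'_le_eLpNorm'_mul_rpow_measure_univ one_pos hp
    hg.aemeasurable.aestronglyMeasurable (μ := μ)
  simp only [eLpNorm'_eq_lintegral_enorm, enorm_eq_self, rpow_one, div_one] at hHolder
  calc ∫⁻ a, f a ∂μ = ∫⁻ a, g a ∂μ := hfg
    _ ≤ (∫⁻ a, g a ^ p ∂μ) ^ (1 / p) * μ univ ^ (1 - 1 / p) := hHolder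
    _ ≤ (∫⁻ a, f a ^ p ∂μ) ^ (1 / p) * μ univ ^ (1 - 1 / p) := by
      gcongr with a
      exact hgf a

theorem rpow_mul_sub_le_rpow {p a t x : ℝ} (hp : 1 ≤ p) (ha : 0 ≤ a) (hat : a < t)
    (htx : t ≤ x) : t ^ ((1 - p) / p) * (t - a) ≤ (x - a) ^ (1 / p) := by
  have hexp : (1 - p) / p ≤ 0 := div_nonpos_of_nonpos_of_nonneg (by linarith) (by linarith)
  calc t ^ ((1 - p) / p) * (t - a) ≤ (t - a) ^ ((1 - p) / p) * (t - a) := by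
        have hta : 0 < t - a := sub_pos.2 hat
        exact mul_le_mul_of_nonneg_right (Real.rpow_le_rpow_of_nonpos hta (by linarith) hexp)
          hta.le
    _ = (t - a) ^ (1 / p) := by
        rw [← Real.rpow_add_one (sub_pos.2 hat).ne']
        congr 1
        field_simp
        ring
    _ ≤ (x - a) ^ (1 / p) := by gcongr

theorem setLIntegral_mul_rpow_mul_sub_le {L : ℝ → ℝ≥0∞} {p a x : ℝ} (hp : 1 ≤ p) (ha : 0 ≤ a)
    (hax : a ≤ x) :
    ∫⁻ t in Ioo a x, L t * ENNReal.ofReal (t ^ ((1 - p) / p)) * ENNReal.ofReal (t - a) ≤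
      (∫⁻ t in Ioo a x, L t ^ p) ^ (1 / p) * ENNReal.ofReal (x - a) := by
  have hxa : 0 ≤ x - a := sub_nonneg.2 hax
  calc ∫⁻ t in Ioo a x, L t * ENNReal.ofReal (t ^ ((1 - p) / p)) * ENNReal.ofReal (t - a)
      ≤ ∫⁻ t in Ioo a x, L t * ENNReal.ofReal ((x - a) ^ (1 / p)) := by
        refine setLIntegral_mono' measurableSet_Ioo fun t ht ↦ ?_
        rw [mul_assoc, ← ENNReal.ofReal_mul (Real.rpow_nonneg (ha.trans ht.1.le) _)]
        gcongr
        exact rpow_mul_sub_le_rpow hp ha ht.1 ht.2.le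
    _ = (∫⁻ t in Ioo a x, L t) * ENNReal.ofReal ((x - a) ^ (1 / p)) :=
        lintegral_mul_const' _ _ ofReal_ne_top
    _ ≤ (∫⁻ t in Ioo a x, L t ^ p) ^ (1 / p) * ENNReal.ofReal (x - a) ^ (1 - 1 / p) *
          ENNReal.ofReal ((x - a) ^ (1 / p)) := by
        gcongr
        simpa [Real.volume_Ioo] using
          lintegral_le_lintegral_rpow_mul_measure_univ (volume.restrict (Ioo a x)) L hp
    _ = (∫⁻ t in Ioo a x, L t ^ p) ^ (1 / p) * ENNReal.ofReal (x - a) := by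
        have h1p : 0 ≤ 1 - 1 / p := by
          rw [sub_nonneg, div_le_one (by linarith)]; exact hp
        rw [mul_assoc, ENNReal.ofReal_rpow_of_nonneg hxa h1p, ← ENNReal.ofReal_mul
          (Real.rpow_nonneg hxa _), ← Real.rpow_add' hxa (by simp), sub_add_cancel, Real.rpow_one]

theorem LipschitzOnWith.eqOn_zero_of_enorm_deriv_le {φ : ℝ → ℝ} {K : NNReal} {a b : ℝ}
    (hφ : LipschitzOnWith K φ (Icc a b)) (hφa : φ a = 0) {g : ℝ → ℝ≥0∞}
    (hg : ∀ᵐ t ∂volume.restrict (Ioo a b), ‖deriv φ t‖ₑ ≤ g t * ‖φ t‖ₑ) {c : ℝ≥0∞} (hc : c < 1)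
    (hgc : ∀ x ∈ Ioc a b,
      ∫⁻ t in Ioo a x, g t * ENNReal.ofReal (t - a) ≤ c * ENNReal.ofReal (x - a)) :
    EqOn φ 0 (Icc a b) := by
  have hbound : ∀ n : ℕ, ∀ x ∈ Icc a b, ‖φ x‖ₑ ≤ K * c ^ n * ENNReal.ofReal (x - a) := by
    intro n
    induction n with
    | zero =>
      intro x hx
      simpa [hφa, Real.enorm_eq_ofReal_abs, edist_dist, Real.dist_eq,
        abs_of_nonneg (sub_nonneg.2 hx.1)] using hφ hx (left_mem_Icc.2 (hx.1.trans hx.2))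
    | succ n ih =>
      intro x hx
      rcases hx.1.eq_or_lt with rfl | hax
      · simp [hφa]
      have hφ_le : ∀ᵐ t ∂volume.restrict (Ioo a x),
          ‖deriv φ t‖ₑ ≤ g t * (K * c ^ n * ENNReal.ofReal (t - a)) := by
        filter_upwards [ae_restrict_of_ae_restrict_of_subset (Ioo_subset_Ioo_right hx.2) hg,
          ae_restrict_mem measurableSet_Ioo] with t ht_deriv ht
        exact ht_deriv.trans (by gcongr; exact ih t ⟨ht.1.le, ht.2.le.trans hx.2⟩)
      calc ‖φ x‖ₑ = ‖φ x - φ a‖ₑ := by rw [hφa, sub_zero]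
        _ ≤ ∫⁻ t in Ioo a x, ‖deriv φ t‖ₑ :=
          (hφ.mono (Icc_subset_Icc_right hx.2)).enorm_sub_le_lintegral_deriv hax.le
        _ ≤ ∫⁻ t in Ioo a x, g t * (K * c ^ n * ENNReal.ofReal (t - a)) := lintegral_mono_ae hφ_le
        _ = K * c ^ n * ∫⁻ t in Ioo a x, g t * ENNReal.ofReal (t - a) := by
          simp_rw [mul_left_comm (g _)]
          exact lintegral_const_mul' _ _ (by finiteness)
        _ ≤ K * c ^ n * (c * ENNReal.ofReal (x - a)) := by gcongr; exact hgc x ⟨hax, hx.2⟩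
        _ = K * c ^ (n + 1) * ENNReal.ofReal (x - a) := by ring
  intro x hx
  have hlim : Tendsto (fun n : ℕ ↦ (K : ℝ≥0∞) * c ^ n * ENNReal.ofReal (x - a)) atTop (𝓝 0) := by
    simpa using ENNReal.Tendsto.mul_const (ENNReal.Tendsto.const_mul
      (ENNReal.tendsto_pow_atTop_nhds_zero_of_lt_one hc) (Or.inr coe_ne_top))
      (Or.inr ofReal_ne_top)
  simpa using ge_of_tendsto' hlim fun n ↦ hbound n x hx

theorem LipschitzOnWith.eqOn_zero_of_lintegral_rpow_lt_one {φ : ℝ → ℝ} {K : NNReal} {a b p : ℝ}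
    (hφ : LipschitzOnWith K φ (Icc a b)) (hφa : φ a = 0) (hp : 1 ≤ p) (ha : 0 ≤ a)
    {L : ℝ → ℝ≥0∞}
    (hderiv : ∀ᵐ t ∂volume.restrict (Ioo a b),
      ‖deriv φ t‖ₑ ≤ L t * ENNReal.ofReal (t ^ ((1 - p) / p)) * ‖φ t‖ₑ)
    (hL : ∫⁻ t in Ioo a b, L t ^ p < 1) :
    EqOn φ 0 (Icc a b) :=
  hφ.eqOn_zero_of_enorm_deriv_le hφa hderiv
    (rpow_lt_one hL (one_div_pos.2 (by linarith : (0 : ℝ) < p)))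
    fun x hx ↦ (setLIntegral_mul_rpow_mul_sub_le hp ha hx.1.le).trans <| by
      gcongr
      exact hx.2

theorem exists_setLIntegral_Ioo_lt {f : ℝ → ℝ≥0∞} {a c : ℝ} (hac : a < c)
    (hf : ∫⁻ t in Ioo a c, f t ≠ ∞) {ε : ℝ≥0∞} (hε : ε ≠ 0) :
    ∃ b ∈ Ioc a c, ∫⁻ t in Ioo a b, f t < ε := by
  obtain ⟨δ, hδ, hsmall⟩ := exists_pos_setLIntegral_lt_of_measure_lt hf hε
  obtain ⟨r, -, hr0, hrδ⟩ := ENNReal.lt_iff_exists_real_btwn.1 hδ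
  have hr : 0 < r := ofReal_pos.1 hr0
  set b := min (a + r) c
  have hsub : Ioo a b ⊆ Ioo a c := Ioo_subset_Ioo_right (min_le_right _ _)
  refine ⟨b, ⟨lt_min (by linarith) hac, min_le_right _ _⟩, ?_⟩
  have hb : volume.restrict (Ioo a c) (Ioo a b) < δ :=
    calc volume.restrict (Ioo a c) (Ioo a b) ≤ volume (Ioo a b) := Measure.restrict_apply_le _ _
      _ = ENNReal.ofReal (b - a) := Real.volume_Ioo
      _ ≤ ENNReal.ofReal r := ofReal_le_ofReal (by linarith [min_le_left (a + r) c])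
      _ < δ := hrδ
  simpa [Measure.restrict_restrict measurableSet_Ioo, inter_eq_self_of_subset_left hsub] using
    hsmall _ hb

theorem stmt0_general (φ : ℝ → ℝ) (K : NNReal) (hφ : LipschitzOnWith K φ (Icc 0 1))
    (hφ0 : φ 0 = 0) (p : ℝ) (hp : 1 ≤ p) (lam : ℝ → ℝ)
    (hlam_Lp : ∫⁻ x in Ioo (0:ℝ) 1, ENNReal.ofReal (lam x ^ p) < ⊤)
    (hineq : ∀ᵐ x ∂(volume.restrict (Ioo (0:ℝ) 1)),
      |deriv φ x| ≤ lam x * |φ x| * x ^ ((1 - p) / p)) :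
    ∀ x ∈ Icc (0:ℝ) 1, φ x = 0 := by
  set L : ℝ → ℝ≥0∞ := fun t ↦ ENNReal.ofReal (lam t)
  have hp0 : 0 < p := by linarith
  have hLp : ∫⁻ t in Ioo 0 1, L t ^ p ≠ ∞ := by
    refine ne_top_of_le_ne_top hlam_Lp.ne (lintegral_mono fun t ↦ ?_)
    rcases le_total 0 (lam t) with h | h
    · rw [ofReal_rpow_of_nonneg h hp0.le]
    · simp [L, ofReal_of_nonpos h, zero_rpow_of_pos hp0]
  have hderiv : ∀ᵐ t ∂volume.restrict (Ioo 0 1),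
      ‖deriv φ t‖ₑ ≤ L t * ENNReal.ofReal (t ^ ((1 - p) / p)) * ‖φ t‖ₑ := by
    filter_upwards [hineq, ae_restrict_mem measurableSet_Ioo] with t ht ht01
    rw [Real.enorm_eq_ofReal_abs, Real.enorm_eq_ofReal_abs,
      ← ofReal_mul' (Real.rpow_nonneg ht01.1.le _), ← ofReal_mul' (abs_nonneg _)]
    exact ofReal_le_ofReal (ht.trans_eq (by ring))
  have hstep : ∀ x ∈ {x | φ x = 0} ∩ Ico 0 1, {x | φ x = 0} ∈ 𝓝[>] x := by
    rintro x ⟨hφx, hx0, hx1⟩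
    obtain ⟨b, hb, hsmall⟩ := exists_setLIntegral_Ioo_lt hx1
      (ne_top_of_le_ne_top hLp (lintegral_mono_set (Ioo_subset_Ioo_left hx0))) one_ne_zero
    have hvanish := (hφ.mono (Icc_subset_Icc hx0 hb.2)).eqOn_zero_of_lintegral_rpow_lt_one hφx hp
      hx0 (ae_restrict_of_ae_restrict_of_subset (Ioo_subset_Ioo hx0 hb.2) hderiv) hsmall
    exact mem_of_superset (Icc_mem_nhdsGT hb.1) hvanish
  have hclosed : IsClosed ({x | φ x = 0} ∩ Icc 0 1) := by
    rw [inter_comm]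
    exact hφ.continuousOn.preimage_isClosed_of_isClosed isClosed_Icc isClosed_singleton
  exact fun x hx ↦ hclosed.Icc_subset_of_forall_mem_nhdsWithin hφ0 hstep hx

/-- If `φ` is Lipschitz on `[0,1]` with `φ 0 = 0`, and there are `p ≥ 1` and a nonnegative
`λ ∈ L^p(0,1)` with `|φ'(x)| ≤ λ(x) |φ(x)| x^((1-p)/p)` a.e. on `(0,1)`, then `φ ≡ 0`. -/
theorem stmt0 (φ : ℝ → ℝ) (K : NNReal) (hφ : LipschitzOnWith K φ (Icc 0 1))
    (hφ0 : φ 0 = 0) (p : ℝ) (hp : 1 ≤ p) (lam : ℝ → ℝ)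
    (hlam_nonneg : ∀ x ∈ Ioo (0:ℝ) 1, 0 ≤ lam x)
    (hlam_Lp : ∫⁻ x in Ioo (0:ℝ) 1, ENNReal.ofReal (lam x ^ p) < ⊤)
    (hineq : ∀ᵐ x ∂(volume.restrict (Ioo (0:ℝ) 1)),
      |deriv φ x| ≤ lam x * |φ x| * x ^ ((1 - p) / p)) :
    ∀ x ∈ Icc (0:ℝ) 1, φ x = 0 :=
  stmt0_general φ K hφ hφ0 p hp lam hlam_Lp hineq
end

section
/- Let φ : [0,1] → ℝ be Lipschitz with φ(0) = 0, and suppose V : [0,1] → [0,∞) satisfies ∫_0^1 V(t)ⁿ t^{n−1} dt < ∞ and |φ'(t)| ≤ V(t)|φ(t)| for a.e. t ∈ (0,1). Then φ ≡ 0 on [0,1]. -/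
/-!
Let `T ∈ [0, 1)` be a zero of `φ`. If `|φ s| ≤ C (s - T)` on `[T, b]`, the differential
inequality and the fundamental theorem of calculus give `|φ t| ≤ C ∫_T^t V(s) (s - T) ds`.
Splitting `V(s) (s - T) ≤ 1/4 + 4^(n-1) (t - T) V(s)ⁿ s^(n-1)` and using the absolute continuity
of the integral of `V(s)ⁿ s^(n-1)`, the right-hand side is at most `(C / 2) (t - T)` once `b` is
close to `T`; this works at `T = 0` too, where `V` itself need not be integrable. Iterating
from the Lipschitz bound `C = K` forces `φ = 0` on `[T, b]`, and a continuous induction over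
`[0, 1]` finishes the proof.
-/

open MeasureTheory Set Filter Topology
open scoped ENNReal NNReal

theorem le_add_pow_div_pow_pred {K : Type*} [Field K] [LinearOrder K] [IsStrictOrderedRing K]
    {x ε : K} (hx : 0 ≤ x) (hε : 0 < ε) {n : ℕ} (hn : 1 ≤ n) :
    x ≤ ε + x ^ n / ε ^ (n - 1) := by
  rcases le_total x ε with hxε | hεx
  · linarith [show 0 ≤ x ^ n / ε ^ (n - 1) by positivity]
  · have : x ≤ x ^ n / ε ^ (n - 1) := by
      rw [le_div_iff₀ (by positivity)]
      calc x * ε ^ (n - 1) ≤ x * x ^ (n - 1) := by gcongr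
        _ = x ^ n := by rw [← pow_succ', Nat.sub_add_cancel hn]
    linarith

theorem mul_sub_le_add_mul_pow {v T s t : ℝ} (hv : 0 ≤ v) (hT : 0 ≤ T) (hTs : T ≤ s)
    (hst : s ≤ t) {n : ℕ} (hn : 1 ≤ n) :
    v * (s - T) ≤ 4⁻¹ + (t - T) * (4 ^ (n - 1) * (v ^ n * s ^ (n - 1))) := by
  have hs : 0 ≤ s := hT.trans hTs
  have hpow : (v * (s - T)) ^ n ≤ (t - T) * (v ^ n * s ^ (n - 1)) := by
    calc (v * (s - T)) ^ n = v ^ n * (s - T) ^ (n - 1) * (s - T) := by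
          rw [mul_pow, mul_assoc, ← pow_succ, Nat.sub_add_cancel hn]
      _ ≤ v ^ n * s ^ (n - 1) * (t - T) := by gcongr; all_goals linarith
      _ = _ := by ring
  calc v * (s - T) ≤ 4⁻¹ + (v * (s - T)) ^ n / 4⁻¹ ^ (n - 1) :=
        le_add_pow_div_pow_pred (mul_nonneg hv (sub_nonneg.2 hTs)) (by norm_num) hn
    _ ≤ _ := by
        rw [inv_pow, div_inv_eq_mul]
        nlinarith [pow_pos (by norm_num : (0 : ℝ) < 4) (n - 1)]

theorem AbsolutelyContinuousOnInterval.enorm_sub_le_setLIntegral_enorm_deriv {f : ℝ → ℝ}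
    {a b : ℝ} (hf : AbsolutelyContinuousOnInterval f a b) (hab : a ≤ b) :
    ‖f b - f a‖ₑ ≤ ∫⁻ x in Ioo a b, ‖deriv f x‖ₑ := by
  rw [← hf.integral_deriv_eq_sub, intervalIntegral.integral_of_le hab,
    integral_Ioc_eq_integral_Ioo]
  exact enorm_integral_le_lintegral_enorm _

theorem ContinuousOn.eqOn_zero_of_forall_eventually_nhdsGT {α β : Type*}
    [ConditionallyCompleteLinearOrder α] [TopologicalSpace α] [OrderTopology α]
    [DenselyOrdered α] [TopologicalSpace β] [T1Space β] [Zero β] {f : α → β} {a b : α}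
    (hf : ContinuousOn f (Icc a b)) (ha : f a = 0)
    (h : ∀ x ∈ Ico a b, f x = 0 → ∀ᶠ y in 𝓝[>] x, f y = 0) :
    EqOn f 0 (Icc a b) := by
  have hclosed : IsClosed (f ⁻¹' {0} ∩ Icc a b) := by
    rw [inter_comm]
    exact hf.preimage_isClosed_of_isClosed isClosed_Icc isClosed_singleton
  exact hclosed.Icc_subset_of_forall_mem_nhdsWithin ha fun x hx => h x hx.2 hx.1

theorem eventually_setLIntegral_mul_sub_le {V : ℝ → ℝ} (hV0 : ∀ s, 0 ≤ V s) {n : ℕ}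
    (hn : 1 ≤ n) {T c : ℝ} (hT : 0 ≤ T) (hTc : T < c)
    (hV : ∫⁻ s in Ioo T c, ENNReal.ofReal (V s ^ n * s ^ (n - 1)) ≠ ∞) :
    ∀ᶠ t in 𝓝[>] T,
      ∫⁻ s in Ioo T t, ENNReal.ofReal (V s * (s - T)) ≤ 2⁻¹ * ENNReal.ofReal (t - T) := by
  set F : ℝ → ℝ≥0∞ := fun s => ENNReal.ofReal (V s ^ n * s ^ (n - 1))
  set B : ℝ → ℝ≥0∞ := fun t => 4⁻¹ + 4 ^ (n - 1) * ∫⁻ s in Ioo T t, F s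
  have hle : ∀ t, T ≤ t →
      ∫⁻ s in Ioo T t, ENNReal.ofReal (V s * (s - T)) ≤ ENNReal.ofReal (t - T) * B t := by
    intro t hTt
    calc ∫⁻ s in Ioo T t, ENNReal.ofReal (V s * (s - T))
        ≤ ∫⁻ s in Ioo T t, (4⁻¹ + ENNReal.ofReal (t - T) * (4 ^ (n - 1) * F s)) := by
          refine setLIntegral_mono' measurableSet_Ioo fun s hs => ?_
          refine (ENNReal.ofReal_le_ofReal
            (mul_sub_le_add_mul_pow (hV0 s) hT hs.1.le hs.2.le hn)).trans_eq ?_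
          have hts : 0 ≤ t - T := by linarith [hs.1, hs.2]
          have hF : 0 ≤ V s ^ n * s ^ (n - 1) :=
            mul_nonneg (pow_nonneg (hV0 s) n) (pow_nonneg (hT.trans hs.1.le) _)
          rw [ENNReal.ofReal_add (by norm_num) (by positivity), ENNReal.ofReal_mul hts,
            ENNReal.ofReal_mul (p := 4 ^ (n - 1)) (by positivity), ENNReal.ofReal_pow (by norm_num),
            ENNReal.ofReal_inv_of_pos (by norm_num), ENNReal.ofReal_ofNat]
      _ = ENNReal.ofReal (t - T) * B t := by
          rw [lintegral_add_left measurable_const, lintegral_const_mul' _ _ (by finiteness),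
            lintegral_const_mul' _ _ (by finiteness), setLIntegral_const, Real.volume_Ioo]
          ring
  have hsmall : Tendsto (fun t => ∫⁻ s in Ioo T t, F s) (𝓝[>] T) (𝓝 0) := by
    have hvol : Tendsto (fun t => ENNReal.ofReal (t - T)) (𝓝[>] T) (𝓝 0) := by
      simpa using ENNReal.tendsto_ofReal
        (((tendsto_id (x := 𝓝 T)).sub_const T).mono_left nhdsWithin_le_nhds)
    have hμ : Tendsto (volume.restrict (Ioo T c) ∘ Ioo T) (𝓝[>] T) (𝓝 0) :=
      tendsto_of_tendsto_of_tendsto_of_le_of_le tendsto_const_nhds hvol (fun _ => zero_le)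
        fun t => (Measure.restrict_le_self _).trans_eq (Real.volume_Ioo (a := T) (b := t))
    refine (tendsto_setLIntegral_zero hV hμ).congr' ?_
    filter_upwards [Ioo_mem_nhdsGT hTc] with t ht
    rw [Measure.restrict_restrict measurableSet_Ioo,
      inter_eq_left.2 (Ioo_subset_Ioo_right ht.2.le)]
  have hB : Tendsto B (𝓝[>] T) (𝓝 4⁻¹) := by
    simpa using (tendsto_const_nhds (x := (4⁻¹ : ℝ≥0∞))).add
      (ENNReal.Tendsto.const_mul hsmall (Or.inr (by finiteness)))
  have hB2 : (4⁻¹ : ℝ≥0∞) < 2⁻¹ := ENNReal.inv_lt_inv.2 (by norm_num)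
  filter_upwards [hB.eventually (gt_mem_nhds hB2), self_mem_nhdsWithin] with t ht hTt
  exact (hle t hTt.le).trans (by rw [mul_comm]; gcongr)

theorem eqOn_zero_of_abs_deriv_le_mul {φ V : ℝ → ℝ} {K : ℝ≥0} {T b : ℝ}
    (hφ : LipschitzOnWith K φ (Icc T b)) (hφT : φ T = 0)
    (hineq : ∀ᵐ s ∂volume.restrict (Ioo T b), |deriv φ s| ≤ V s * |φ s|)
    (hV : ∀ t ∈ Ioc T b,
      ∫⁻ s in Ioo T t, ENNReal.ofReal (V s * (s - T)) ≤ 2⁻¹ * ENNReal.ofReal (t - T)) :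
    EqOn φ 0 (Icc T b) := by
  have halve : ∀ C ≠ ∞, (∀ s ∈ Icc T b, ‖φ s‖ₑ ≤ C * ENNReal.ofReal (s - T)) →
      ∀ t ∈ Icc T b, ‖φ t‖ₑ ≤ 2⁻¹ * C * ENNReal.ofReal (t - T) := by
    intro C hC hCφ t ht
    rcases ht.1.eq_or_lt with rfl | hTt
    · simp [hφT]
    have hφ' : AbsolutelyContinuousOnInterval φ T t :=
      (hφ.mono (by simpa [uIcc_of_le ht.1] using Icc_subset_Icc_right ht.2)
        ).absolutelyContinuousOnInterval
    calc ‖φ t‖ₑ = ‖φ t - φ T‖ₑ := by rw [hφT, sub_zero]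
      _ ≤ ∫⁻ s in Ioo T t, ‖deriv φ s‖ₑ := hφ'.enorm_sub_le_setLIntegral_enorm_deriv ht.1
      _ ≤ ∫⁻ s in Ioo T t, C * ENNReal.ofReal (V s * (s - T)) := by
        refine lintegral_mono_ae ?_
        filter_upwards [ae_restrict_of_ae_restrict_of_subset (Ioo_subset_Ioo_right ht.2) hineq,
          ae_restrict_mem measurableSet_Ioo] with s hs hsT
        calc ‖deriv φ s‖ₑ ≤ ENNReal.ofReal (V s * |φ s|) := by
              rw [Real.enorm_eq_ofReal_abs]; exact ENNReal.ofReal_le_ofReal hs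
          _ = ENNReal.ofReal (V s) * ‖φ s‖ₑ := by
              rw [ENNReal.ofReal_mul' (abs_nonneg _), Real.enorm_eq_ofReal_abs]
          _ ≤ ENNReal.ofReal (V s) * (C * ENNReal.ofReal (s - T)) := by
              gcongr; exact hCφ s ⟨hsT.1.le, hsT.2.le.trans ht.2⟩
          _ = C * ENNReal.ofReal (V s * (s - T)) := by
              rw [ENNReal.ofReal_mul' (sub_nonneg.2 hsT.1.le)]; ring
      _ = C * ∫⁻ s in Ioo T t, ENNReal.ofReal (V s * (s - T)) := lintegral_const_mul' _ _ hC
      _ ≤ C * (2⁻¹ * ENNReal.ofReal (t - T)) := by gcongr; exact hV t ⟨hTt, ht.2⟩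
      _ = 2⁻¹ * C * ENNReal.ofReal (t - T) := by ring
  have hbound : ∀ m : ℕ, ∀ t ∈ Icc T b, ‖φ t‖ₑ ≤ 2⁻¹ ^ m * K * ENNReal.ofReal (t - T) := by
    intro m
    induction m with
    | zero =>
      intro t ht
      have := hφ ht ⟨le_rfl, ht.1.trans ht.2⟩
      rwa [edist_eq_enorm_sub, edist_eq_enorm_sub, hφT, sub_zero,
        Real.enorm_of_nonneg (sub_nonneg.2 ht.1), ← one_mul (K : ℝ≥0∞), ← pow_zero 2⁻¹] at this
    | succ m ih => simpa only [pow_succ', mul_assoc] using halve _ (by finiteness) ih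
  intro t ht
  have hlim : Tendsto (fun m : ℕ => 2⁻¹ ^ m * K * ENNReal.ofReal (t - T)) atTop (𝓝 0) := by
    simpa using ENNReal.Tendsto.mul_const (ENNReal.Tendsto.mul_const
      (ENNReal.tendsto_pow_atTop_nhds_zero_of_lt_one (by norm_num : (2⁻¹ : ℝ≥0∞) < 1))
      (Or.inr ENNReal.coe_ne_top)) (Or.inr ENNReal.ofReal_ne_top)
  exact enorm_eq_zero.1 (nonpos_iff_eq_zero.1 (ge_of_tendsto' hlim (hbound · t ht)))

/-- Radial-ray Gronwall-type uniqueness: if `φ` is Lipschitz on `[0,1]` with `φ 0 = 0`,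
`V ≥ 0` satisfies `∫_0^1 V(t)ⁿ t^{n-1} dt < ∞` and `|φ'(t)| ≤ V(t)|φ(t)|` a.e.,
then `φ ≡ 0` on `[0,1]`. -/
theorem stmt12 (n : ℕ) (hn : 1 ≤ n) (φ : ℝ → ℝ) (K : NNReal)
    (hφ : LipschitzOnWith K φ (Icc 0 1)) (hφ0 : φ 0 = 0)
    (V : ℝ → ℝ) (hV_nonneg : ∀ t, 0 ≤ V t)
    (hV : ∫⁻ t in Ioo (0:ℝ) 1, ENNReal.ofReal (V t ^ n * t ^ (n - 1)) < ⊤)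
    (hineq : ∀ᵐ t ∂(volume.restrict (Ioo (0:ℝ) 1)), |deriv φ t| ≤ V t * |φ t|) :
    ∀ t ∈ Icc (0:ℝ) 1, φ t = 0 := by
  refine hφ.continuousOn.eqOn_zero_of_forall_eventually_nhdsGT hφ0 fun T hT hφT => ?_
  have hVT : ∫⁻ s in Ioo T 1, ENNReal.ofReal (V s ^ n * s ^ (n - 1)) ≠ ∞ :=
    ((lintegral_mono_set (Ioo_subset_Ioo_left hT.1)).trans_lt hV).ne
  obtain ⟨b, hTb, hb⟩ := mem_nhdsGT_iff_exists_Ioc_subset.1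
    ((eventually_setLIntegral_mul_sub_le hV_nonneg hn hT.1 hT.2 hVT).and (Ioo_mem_nhdsGT hT.2))
  have hb1 : b < 1 := (hb ⟨hTb, le_rfl⟩).2.2
  have hzero : EqOn φ 0 (Icc T b) :=
    eqOn_zero_of_abs_deriv_le_mul (hφ.mono (Icc_subset_Icc hT.1 hb1.le)) hφT
      (ae_restrict_of_ae_restrict_of_subset (Ioo_subset_Ioo hT.1 hb1.le) hineq)
      fun t ht => (hb ht).1
  filter_upwards [Ioo_mem_nhdsGT hTb] with t ht using hzero (Ioo_subset_Icc_self ht)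
end

section
/- Let f : (a,b) → ℝ be a non-constant locally Lipschitz function on an open interval with f(c) = 0 for some c ∈ (a,b). Then ∫_{(a,b) \ f⁻¹(0)} |f'(x)/f(x)| dx = ∞. -/
/-!
Take `v` with `f v ≠ 0` and let `d` be the zero of `f` between `c` and `v` nearest to `v`.
Between `d` and `v` the function `log |f|` (which is `Real.log ∘ f`) is locally Lipschitz,
hence absolutely continuous on each closed subinterval `[u, v]` not containing `d`, with
derivative `f' / f` a.e.; so `|log |f v| - log |f u|| ≤ ∫ |f' / f|`. As `u → d`,
`log |f u| → -∞`, so the integral is infinite.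
-/

open MeasureTheory Set Filter Topology Real
open scoped Interval

theorem LocallyLipschitzOn.exists_lipschitzOnWith_log {α : Type*} [PseudoMetricSpace α]
    {f : α → ℝ} {s : Set α} (hs : IsCompact s) (hs_conn : IsPreconnected s)
    (hf : LocallyLipschitzOn s f) (h0 : ∀ x ∈ s, f x ≠ 0) :
    ∃ K, LipschitzOnWith K (fun x ↦ log (f x)) s := by
  obtain ⟨K, hK⟩ := hf.exists_lipschitzOnWith_of_compact hs
  have himage : IsCompact (f '' s) := hs.image_of_continuousOn hf.continuousOn
  have hlog : ContDiffOn ℝ 1 log (f '' s) :=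
    Real.contDiffOn_log.mono (by rintro _ ⟨x, hx, rfl⟩; exact h0 x hx)
  obtain ⟨L, hL⟩ := hlog.exists_lipschitzOnWith one_ne_zero
    (hs_conn.image f hf.continuousOn).ordConnected.convex himage
  exact ⟨L * K, hL.comp hK (mapsTo_image f s)⟩

theorem ofReal_abs_log_sub_log_le_lintegral {f : ℝ → ℝ} {u v : ℝ}
    (hf : LocallyLipschitzOn (uIcc u v) f) (h0 : ∀ x ∈ uIcc u v, f x ≠ 0) :
    ENNReal.ofReal |log (f v) - log (f u)| ≤
      ∫⁻ x in Ι u v, ENNReal.ofReal |deriv f x / f x| := by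
  obtain ⟨K, hK⟩ := hf.exists_lipschitzOnWith_of_compact isCompact_uIcc
  obtain ⟨L, hL⟩ := hf.exists_lipschitzOnWith_log isCompact_uIcc isPreconnected_uIcc h0
  have hderiv : ∀ᵐ x, x ∈ Ι u v → deriv (fun y ↦ log (f y)) x = deriv f x / f x := by
    filter_upwards [hK.absolutelyContinuousOnInterval.ae_differentiableAt] with x hx hxu
    exact deriv.log (hx (uIoc_subset_uIcc hxu)) (h0 x (uIoc_subset_uIcc hxu))
  calc ENNReal.ofReal |log (f v) - log (f u)|
      = ‖∫ x in u..v, deriv (fun y ↦ log (f y)) x‖ₑ := by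
        rw [hL.absolutelyContinuousOnInterval.integral_deriv_eq_sub, Real.enorm_eq_ofReal_abs]
    _ = ‖∫ x in Ι u v, deriv f x / f x‖ₑ := by
        rw [intervalIntegral.integral_congr_ae hderiv, ← ofReal_norm,
          intervalIntegral.norm_integral_eq_norm_integral_uIoc, ofReal_norm]
    _ ≤ ∫⁻ x in Ι u v, ENNReal.ofReal |deriv f x / f x| := by
        simpa only [Real.enorm_eq_ofReal_abs] using
          enorm_integral_le_lintegral_enorm (fun x ↦ deriv f x / f x)

theorem exists_nearest_zero {f : ℝ → ℝ} {c v : ℝ} (hf : ContinuousOn f (uIcc c v))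
    (hc : f c = 0) :
    ∃ d ∈ uIcc c v, f d = 0 ∧ ∀ x ∈ uIcc d v \ {d}, f x ≠ 0 := by
  have hZ : IsCompact (uIcc c v ∩ f ⁻¹' {0}) :=
    isCompact_uIcc.of_isClosed_subset
      (hf.preimage_isClosed_of_isClosed isCompact_uIcc.isClosed isClosed_singleton)
      inter_subset_left
  obtain ⟨d, ⟨hd, hfd⟩, hmin⟩ := hZ.exists_isMinOn ⟨c, left_mem_uIcc, hc⟩
    (continuous_id.sub continuous_const).abs.continuousOn
  refine ⟨d, hd, hfd, fun x ⟨hx, hxd⟩ hfx ↦ ?_⟩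
  have hdx : |d - v| ≤ |x - v| := hmin ⟨uIcc_subset_uIcc_right hd hx, hfx⟩
  rw [mem_uIcc] at hx
  rw [mem_singleton_iff] at hxd
  grind

theorem nhdsWithin_uIcc_sdiff_left_neBot {d v : ℝ} (h : d ≠ v) :
    (𝓝[uIcc d v \ {d}] d).NeBot := by
  rcases h.lt_or_gt with h | h
  · rw [uIcc_of_le h.le, Icc_sdiff_left, nhdsWithin_Ioc_eq_nhdsGT h]; infer_instance
  · rw [uIcc_of_ge h.le, Icc_sdiff_right, nhdsWithin_Ico_eq_nhdsLT h]; infer_instance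

theorem lintegral_abs_deriv_div_eq_top_of_eq_zero {f : ℝ → ℝ} {d v : ℝ} (hdv : d ≠ v)
    (hf : LocallyLipschitzOn (uIcc d v) f) (hfd : f d = 0)
    (h0 : ∀ x ∈ uIcc d v \ {d}, f x ≠ 0) :
    ∫⁻ x in uIcc d v \ {d}, ENNReal.ofReal |deriv f x / f x| = ⊤ := by
  set s := uIcc d v \ {d}
  have := nhdsWithin_uIcc_sdiff_left_neBot hdv
  by_contra hM
  set M := ∫⁻ x in s, ENNReal.ofReal |deriv f x / f x|
  have hf_to_zero : Tendsto f (𝓝[s] d) (𝓝[≠] 0) :=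
    tendsto_nhdsWithin_iff.2 ⟨hfd ▸ (hf.continuousOn d left_mem_uIcc).mono sdiff_subset,
      eventually_mem_nhdsWithin.mono h0⟩
  obtain ⟨u, hu_log, hu, hud⟩ : ∃ u, log (f u) < log (f v) - (M.toReal + 1) ∧
      u ∈ uIcc d v ∧ u ≠ d :=
    ((Real.tendsto_log_nhdsNE_zero.comp hf_to_zero).eventually
      (eventually_lt_atBot _)).and self_mem_nhdsWithin |>.exists
  have hus : uIcc u v ⊆ s := fun x hx ↦
    ⟨uIcc_subset_uIcc_right hu hx, fun hxd ↦ hud (by grind [mem_uIcc])⟩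
  have : ENNReal.ofReal (M.toReal + 1) ≤ M :=
    calc ENNReal.ofReal (M.toReal + 1)
        ≤ ENNReal.ofReal |log (f v) - log (f u)| := by
          gcongr; exact (le_abs_self _).trans' (by linarith)
      _ ≤ ∫⁻ x in Ι u v, ENNReal.ofReal |deriv f x / f x| :=
          ofReal_abs_log_sub_log_le_lintegral (hf.mono (uIcc_subset_uIcc_right hu))
            fun x hx ↦ h0 x (hus hx)
      _ ≤ M := lintegral_mono_set (uIoc_subset_uIcc.trans hus)
  rw [ENNReal.ofReal_add ENNReal.toReal_nonneg zero_le_one, ENNReal.ofReal_toReal hM,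
    ENNReal.ofReal_one] at this
  exact (ENNReal.lt_add_right hM one_ne_zero).not_ge this

theorem stmt13_general (a b : ℝ) (f : ℝ → ℝ)
    (hf : ∀ x ∈ Ioo a b, ∃ K : NNReal, ∃ t ∈ nhds x, LipschitzOnWith K f t)
    (hnc : ¬ ∃ c : ℝ, ∀ x ∈ Ioo a b, f x = c)
    (c : ℝ) (hc : c ∈ Ioo a b) (hfc : f c = 0) :
    ∫⁻ x in Ioo a b \ f ⁻¹' {0}, ENNReal.ofReal (|deriv f x / f x|) = ⊤ := by
  have hloc : LocallyLipschitzOn (Ioo a b) f := fun x hx ↦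
    let ⟨K, t, ht, hK⟩ := hf x hx
    ⟨K, t, mem_nhdsWithin_of_mem_nhds ht, hK⟩
  obtain ⟨v, hv, hfv⟩ : ∃ v ∈ Ioo a b, f v ≠ 0 := by
    by_contra! h
    exact hnc ⟨0, h⟩
  have hcv : uIcc c v ⊆ Ioo a b := ordConnected_Ioo.uIcc_subset hc hv
  obtain ⟨d, hd, hfd, h0⟩ := exists_nearest_zero (hloc.continuousOn.mono hcv) hfc
  have hdv : uIcc d v ⊆ Ioo a b := (uIcc_subset_uIcc_right hd).trans hcv
  refine top_unique ?_
  calc ⊤ = ∫⁻ x in uIcc d v \ {d}, ENNReal.ofReal |deriv f x / f x| :=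
        (lintegral_abs_deriv_div_eq_top_of_eq_zero (by rintro rfl; exact hfv hfd)
          (hloc.mono hdv) hfd h0).symm
    _ ≤ ∫⁻ x in Ioo a b \ f ⁻¹' {0}, ENNReal.ofReal |deriv f x / f x| :=
        lintegral_mono_set fun x hx ↦ ⟨hdv hx.1, h0 x hx⟩

/-- One-dimensional case: if `f` is non-constant and locally Lipschitz on `(a,b)` with a
zero `c ∈ (a,b)`, then `∫_{(a,b) \ f⁻¹(0)} |f'/f| dx = ∞`. -/
theorem stmt13 (a b : ℝ) (hab : a < b) (f : ℝ → ℝ)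
    (hf : ∀ x ∈ Ioo a b, ∃ K : NNReal, ∃ t ∈ nhds x, LipschitzOnWith K f t)
    (hnc : ¬ ∃ c : ℝ, ∀ x ∈ Ioo a b, f x = c)
    (c : ℝ) (hc : c ∈ Ioo a b) (hfc : f c = 0) :
    ∫⁻ x in Ioo a b \ f ⁻¹' {0}, ENNReal.ofReal (|deriv f x / f x|) = ⊤ :=
  stmt13_general a b f hf hnc c hc hfc
end
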